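/- Let F be a field of characteristic different from 2 and let ρ ∈ F with ρ ≠ 0. Let W := {v ∈ F⁸ : v₄ = v₅ and ρv₃ + v₆ = 0}, a 6-dimensional subspace of F⁸, and define the bilinear form B on W by B(x,y) := T(v_ρ, x, y). Then B is alternating (B(x,x) = 0 for all x ∈ W) and nondegenerate on W (if x ∈ W satisfies B(x,y) = 0 for all y ∈ W, then x = 0). -/
import Mathlib


open Matrix

noncomputable section

/-- The vector `v_ρ = (0,0,1,0,0,ρ,0,0)ᵗ`. -/
def vrho (F : Type*) [Field F] (ρ : F) : Fin 8 → F := ![0, 0, 1, 0, 0, ρ, 0, 0]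

/-- The alternating trilinear form `T` on `F⁸` fixing the split `G₂`. -/
def Tform (F : Type*) [Field F] (x y z : Fin 8 → F) : F :=
    (!![x 6, y 6, z 6; x 3 + x 4, y 3 + y 4, z 3 + z 4; x 1, y 1, z 1]).det
  + (!![x 0, y 0, z 0; x 3 + x 4, y 3 + y 4, z 3 + z 4; x 7, y 7, z 7]).det
  + (!![x 5, y 5, z 5; x 3 + x 4, y 3 + y 4, z 3 + z 4; x 2, y 2, z 2]).det
  + 2 * (!![x 2, y 2, z 2; x 1, y 1, z 1; x 7, y 7, z 7]).det
  - 2 * (!![x 5, y 5, z 5; x 6, y 6, z 6; x 0, y 0, z 0]).det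

/-- The subspace `W = {v ∈ F⁸ : v₄ = v₅, ρv₃ + v₆ = 0}` (the orthogonal
complement of `⟨v₀, v_ρ⟩`). -/
def W (F : Type*) [Field F] (ρ : F) : Set (Fin 8 → F) :=
  {v | v 3 = v 4 ∧ ρ * v 2 + v 5 = 0}

set_option linter.unusedSectionVars false

section aux
variable {F : Type*} [Field F] (a0 a1 a2 a3 a4 a5 a6 a7 : F)

lemma v8_0 : (![a0,a1,a2,a3,a4,a5,a6,a7] : Fin 8 → F) 0 = a0 := rfl
lemma v8_1 : (![a0,a1,a2,a3,a4,a5,a6,a7] : Fin 8 → F) 1 = a1 := rfl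
lemma v8_2 : (![a0,a1,a2,a3,a4,a5,a6,a7] : Fin 8 → F) 2 = a2 := rfl
lemma v8_3 : (![a0,a1,a2,a3,a4,a5,a6,a7] : Fin 8 → F) 3 = a3 := rfl
lemma v8_4 : (![a0,a1,a2,a3,a4,a5,a6,a7] : Fin 8 → F) 4 = a4 := rfl
lemma v8_5 : (![a0,a1,a2,a3,a4,a5,a6,a7] : Fin 8 → F) 5 = a5 := rfl
lemma v8_6 : (![a0,a1,a2,a3,a4,a5,a6,a7] : Fin 8 → F) 6 = a6 := rfl
lemma v8_7 : (![a0,a1,a2,a3,a4,a5,a6,a7] : Fin 8 → F) 7 = a7 := rfl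

end aux

section aux3
variable {F : Type*} [Field F] (a b c d e f g h i : F)
lemma m00 : (!![a,b,c;d,e,f;g,h,i]) 0 0 = a := rfl
lemma m01 : (!![a,b,c;d,e,f;g,h,i]) 0 1 = b := rfl
lemma m02 : (!![a,b,c;d,e,f;g,h,i]) 0 2 = c := rfl
lemma m10 : (!![a,b,c;d,e,f;g,h,i]) 1 0 = d := rfl
lemma m11 : (!![a,b,c;d,e,f;g,h,i]) 1 1 = e := rfl
lemma m12 : (!![a,b,c;d,e,f;g,h,i]) 1 2 = f := rfl
lemma m20 : (!![a,b,c;d,e,f;g,h,i]) 2 0 = g := rfl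
lemma m21 : (!![a,b,c;d,e,f;g,h,i]) 2 1 = h := rfl
lemma m22 : (!![a,b,c;d,e,f;g,h,i]) 2 2 = i := rfl
end aux3

set_option maxHeartbeats 1000000 in
lemma Tform_eval (F : Type*) [Field F] (ρ : F) (x y : Fin 8 → F) :
    Tform F (vrho F ρ) x y =
      ρ * ((x 3 + x 4) * y 2 - x 2 * (y 3 + y 4))
      + (x 5 * (y 3 + y 4) - (x 3 + x 4) * y 5)
      + 2 * (x 1 * y 7 - x 7 * y 1)
      - 2 * ρ * (x 6 * y 0 - x 0 * y 6) := by
  simp only [Tform, det_fin_three, vrho]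
  simp only [v8_0, v8_1, v8_2, v8_3, v8_4, v8_5, v8_6, v8_7]
  simp only [m00, m01, m02, m10, m11, m12, m20, m21, m22]
  ring

/-- For `char F ≠ 2` and `ρ ≠ 0`, the bilinear form `B(x,y) = T(v_ρ, x, y)` on
`W` is alternating and nondegenerate. -/
theorem stmt11 (F : Type*) [Field F] (h2 : (2 : F) ≠ 0) (ρ : F) (hρ : ρ ≠ 0) :
    (∀ x ∈ W F ρ, Tform F (vrho F ρ) x x = 0) ∧
    (∀ x ∈ W F ρ, (∀ y ∈ W F ρ, Tform F (vrho F ρ) x y = 0) → x = 0) := by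
  constructor
  · intro x hx
    rw [Tform_eval]
    ring
  · intro x hx hxy
    obtain ⟨h34, h25⟩ := hx
    have e2 : (![0, 0, 1, 0, 0, -ρ, 0, 0] : Fin 8 → F) ∈ W F ρ := by
      constructor <;> simp [W, v8_2, v8_3, v8_4, v8_5]
    have e34 : (![0, 0, 0, 1, 1, 0, 0, 0] : Fin 8 → F) ∈ W F ρ := by
      constructor <;> simp [W, v8_2, v8_3, v8_4, v8_5]
    have e1 : (![0, 1, 0, 0, 0, 0, 0, 0] : Fin 8 → F) ∈ W F ρ := by
      constructor <;> simp [W, v8_2, v8_3, v8_4, v8_5]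
    have e7 : (![0, 0, 0, 0, 0, 0, 0, 1] : Fin 8 → F) ∈ W F ρ := by
      constructor <;> simp [W, v8_2, v8_3, v8_4, v8_5]
    have e0 : (![1, 0, 0, 0, 0, 0, 0, 0] : Fin 8 → F) ∈ W F ρ := by
      constructor <;> simp [W, v8_2, v8_3, v8_4, v8_5]
    have e6 : (![0, 0, 0, 0, 0, 0, 1, 0] : Fin 8 → F) ∈ W F ρ := by
      constructor <;> simp [W, v8_2, v8_3, v8_4, v8_5]
    have H2 := hxy _ e2
    have H34 := hxy _ e34
    have H1 := hxy _ e1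
    have H7 := hxy _ e7
    have H0 := hxy _ e0
    have H6 := hxy _ e6
    rw [Tform_eval] at H2 H34 H1 H7 H0 H6
    simp only [v8_0, v8_1, v8_2, v8_3, v8_4, v8_5, v8_6, v8_7] at H2 H34 H1 H7 H0 H6
    have h4ρ : (4 : F) * ρ ≠ 0 := by
      have h4 : (4 : F) = 2 * 2 := by norm_num
      rw [h4]
      exact mul_ne_zero (mul_ne_zero h2 h2) hρ
    have h2ρ : (2 : F) * ρ ≠ 0 := mul_ne_zero h2 hρ
    have hx3 : x 3 = 0 := by
      have h : (4 * ρ) * x 3 = 0 := by linear_combination H2 + 2 * ρ * h34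
      exact (mul_eq_zero.mp h).resolve_left h4ρ
    have hx4 : x 4 = 0 := h34 ▸ hx3
    have hx2 : x 2 = 0 := by
      have h : (4 * ρ) * x 2 = 0 := by linear_combination -H34 + 2 * h25
      exact (mul_eq_zero.mp h).resolve_left h4ρ
    have hx5 : x 5 = 0 := by linear_combination h25 - ρ * hx2
    have hx7 : x 7 = 0 := by
      have h : (2 : F) * x 7 = 0 := by linear_combination -H1
      exact (mul_eq_zero.mp h).resolve_left h2
    have hx1 : x 1 = 0 := by
      have h : (2 : F) * x 1 = 0 := by linear_combination H7
      exact (mul_eq_zero.mp h).resolve_left h2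
    have hx6 : x 6 = 0 := by
      have h : (2 * ρ) * x 6 = 0 := by linear_combination -H0
      exact (mul_eq_zero.mp h).resolve_left h2ρ
    have hx0 : x 0 = 0 := by
      have h : (2 * ρ) * x 0 = 0 := by linear_combination H6
      exact (mul_eq_zero.mp h).resolve_left h2ρ
    funext i
    fin_cases i <;> simp [hx0, hx1, hx2, hx3, hx4, hx5, hx6, hx7]
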